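/- arXiv:1606.03974 — 3 statements merged into one kernel-verified Lean document; each statement's English description precedes it below -/
import Mathlib

section
/- Let a<b, let L ∈ C([a,b]×ℝ×ℝ) satisfy (H2) with constant μ>0, let K0 ⊂ [a,b]×ℝ be compact, let k ≥ 0, and set c(k) := max(sup_{(t,w,p)∈K0×[−k,k]}|L(t,w,p)|, sup_{(t,w,p)∈K0×[−k,k]}|L_v(t,w,p)|). Then for all (x1,u1),(x2,u2),(x3,u3) ∈ K0, all p with |p| ≤ k, and all ζ ∈ ℝ: L_{(x1,u1,p)}(x2,u2,p+ζ) − L_{(x1,u1,p)}(x3,u3,p) ≥ (μ/2)ζ² − 2c(k)(|ζ|+1), where L_{(t,y,p)}(x,u,v) := L(x,u,v) − L_v(t,y,p)v. -/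
open MeasureTheory Set Filter Topology
open scoped ENNReal

noncomputable section

/-- An element of `W^{1,1}([a,b])`: an absolutely continuous function on `[a,b]`,
recorded together with a choice of integrable a.e. derivative. -/
structure ACFn (a b : ℝ) where
  toFun : ℝ → ℝ
  deriv : ℝ → ℝ
  integrable : IntegrableOn deriv (Icc a b)
  rep : ∀ x ∈ Icc a b, toFun x = toFun a + ∫ t in a..x, deriv t

namespace ACFn

variable {a b : ℝ}

/-- `k_u(s,t) = (u(s) - u(t))/(s - t)`. -/
def kk (u : ACFn a b) (s t : ℝ) : ℝ := (u.toFun s - u.toFun t) / (s - t)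

/-- The modified function `u_{s,t}`. -/
def modFun (u : ACFn a b) (s t : ℝ) : ℝ → ℝ := fun x =>
  if x ∈ Ioo s t then u.toFun s + u.kk s t * (x - s) else u.toFun x

/-- The derivative of the modified function `u_{s,t}`. -/
def modDeriv (u : ACFn a b) (s t : ℝ) : ℝ → ℝ := fun x =>
  if x ∈ Ioo s t then u.kk s t else u.deriv x

end ACFn

/-- `J_L(w;[a,b])` for a function `w` with derivative `w'`. -/
def JFun (a b : ℝ) (L : ℝ → ℝ → ℝ → ℝ) (w w' : ℝ → ℝ) : ℝ :=
  ∫ x in a..b, L x (w x) (w' x)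

/-- `J_L(u;[a,b])`. -/
def JL (a b : ℝ) (L : ℝ → ℝ → ℝ → ℝ) (u : ACFn a b) : ℝ :=
  JFun a b L u.toFun u.deriv

/-- `L ∈ C([a,b] × ℝ × ℝ)`. -/
def ContL (a b : ℝ) (L : ℝ → ℝ → ℝ → ℝ) : Prop :=
  ContinuousOn (fun p : ℝ × ℝ × ℝ => L p.1 p.2.1 p.2.2) (Icc a b ×ˢ (univ : Set (ℝ × ℝ)))

/-- `L` is `α`-Hölder with constant `C` on `G`. -/
def HolderOn (L : ℝ → ℝ → ℝ → ℝ) (G : Set (ℝ × ℝ × ℝ)) (C α : ℝ) : Prop :=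
  ∀ p ∈ G, ∀ q ∈ G,
    |L p.1 p.2.1 p.2.2 - L q.1 q.2.1 q.2.2|
      ≤ C * (|p.1 - q.1| + |p.2.1 - q.2.1| + |p.2.2 - q.2.2|) ^ α

/-- Hypothesis (H₁): local Hölder continuity of `L`. -/
def H1 (a b : ℝ) (L : ℝ → ℝ → ℝ → ℝ) : Prop :=
  ∀ G : Set (ℝ × ℝ × ℝ), IsCompact G → G ⊆ Icc a b ×ˢ (univ : Set (ℝ × ℝ)) →
    ∃ C > (0:ℝ), ∃ α > (0:ℝ), HolderOn L G C α

/-- Hypothesis (H₂): global ellipticity, with `Lv`, `Lvv` the partial derivatives in `v`. -/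
def H2 (a b : ℝ) (L Lv Lvv : ℝ → ℝ → ℝ → ℝ) (μ : ℝ) : Prop :=
  0 < μ ∧
  (∀ x ∈ Icc a b, ∀ u v : ℝ, HasDerivAt (fun w => L x u w) (Lv x u v) v) ∧
  (∀ x ∈ Icc a b, ∀ u v : ℝ, HasDerivAt (fun w => Lv x u w) (Lvv x u v) v) ∧
  ContinuousOn (fun p : ℝ × ℝ × ℝ => Lvv p.1 p.2.1 p.2.2) (Icc a b ×ˢ (univ : Set (ℝ × ℝ))) ∧
  (∀ x ∈ Icc a b, ∀ u v : ℝ, μ ≤ Lvv x u v)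

/-- `ω : [0,∞)² → [0,∞)` is increasing in each argument and `ω(k,0) = 0`. -/
def OmegaAdm (ω : ℝ → ℝ → ℝ) : Prop :=
  (∀ k ε : ℝ, 0 ≤ k → 0 ≤ ε → 0 ≤ ω k ε) ∧
  (∀ k₁ k₂ ε₁ ε₂ : ℝ, 0 ≤ k₁ → k₁ ≤ k₂ → 0 ≤ ε₁ → ε₁ ≤ ε₂ → ω k₁ ε₁ ≤ ω k₂ ε₂) ∧
  (∀ k : ℝ, 0 ≤ k → ω k 0 = 0)

/-- Membership in the class `𝓛_ω(L,K,c,δ₀)`: (A₁), (A₂) and (A₃). -/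
def MemClass (a b : ℝ) (L : ℝ → ℝ → ℝ → ℝ) (K : Set (ℝ × ℝ)) (ω : ℝ → ℝ → ℝ)
    (c δ0 : ℝ) (u : ACFn a b) : Prop :=
  (∀ x ∈ Icc a b, (x, u.toFun x) ∈ K) ∧
  JL a b L u ≤ c ∧
  ∀ s t : ℝ, s ∈ Icc a b → t ∈ Icc a b → s < t → t - s ≤ δ0 →
    JL a b L u ≤ JFun a b L (u.modFun s t) (u.modDeriv s t) + ω |u.kk s t| (t - s) * (t - s)

/-- `N` bounds the `L²` norm of `u'` for every `u` satisfying (A₁) and (A₂). -/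
def NBound (a b : ℝ) (L : ℝ → ℝ → ℝ → ℝ) (K : Set (ℝ × ℝ)) (c N : ℝ) : Prop :=
  0 < N ∧ ∀ u : ACFn a b, (∀ x ∈ Icc a b, (x, u.toFun x) ∈ K) → JL a b L u ≤ c →
    (∫ x in a..b, u.deriv x ^ 2) ≤ N ^ 2

/-- Sum-distance from a point to the set `K`. -/
def distSum (K : Set (ℝ × ℝ)) (p : ℝ × ℝ) : ℝ :=
  sInf ((fun q : ℝ × ℝ => |q.1 - p.1| + |q.2 - p.2|) '' K)

/-- The enlarged compact set `K₀`. -/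
def K0set (a b : ℝ) (K : Set (ℝ × ℝ)) (r : ℝ) : Set (ℝ × ℝ) :=
  {p : ℝ × ℝ | p.1 ∈ Icc a b ∧ distSum K p ≤ r}

/-- The constant `c(k)`. -/
def cConst (L Lv : ℝ → ℝ → ℝ → ℝ) (K0 : Set (ℝ × ℝ)) (k : ℝ) : ℝ :=
  sSup ((fun q : (ℝ × ℝ) × ℝ => max |L q.1.1 q.1.2 q.2| |Lv q.1.1 q.1.2 q.2|) ''
    (K0 ×ˢ Icc (-k) k))

/-- The subset `S × I` of `[a,b] × ℝ × ℝ`, as a set of triples. -/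
def tripleSet (S : Set (ℝ × ℝ)) (I : Set ℝ) : Set (ℝ × ℝ × ℝ) :=
  {p : ℝ × ℝ × ℝ | (p.1, p.2.1) ∈ S ∧ p.2.2 ∈ I}

/-- `ŵ(k,ε) = √(ω(k, ε + N√ε))`. -/
def omegaHat (ω : ℝ → ℝ → ℝ) (N k ε : ℝ) : ℝ :=
  Real.sqrt (ω k (ε + N * Real.sqrt ε))

/-- `ω̄(k,ε) = (√ŵ(k,ε))^{α(k)} + √ŵ(k,ε) + ŵ(k,ε)`. -/
def omegaBar (ω : ℝ → ℝ → ℝ) (N : ℝ) (α : ℝ → ℝ) (k ε : ℝ) : ℝ :=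
  Real.sqrt (omegaHat ω N k ε) ^ α k + Real.sqrt (omegaHat ω N k ε) + omegaHat ω N k ε

/-- Condition (H^{K,δ₀}_ω), with explicit data `M` and `α`. -/
def HcondWith (a b : ℝ) (L Lv : ℝ → ℝ → ℝ → ℝ) (μ : ℝ) (K : Set (ℝ × ℝ))
    (ω : ℝ → ℝ → ℝ) (N δ0 : ℝ) (M α : ℝ → ℝ) : Prop :=
  (∀ k : ℝ, 0 ≤ k → 0 < M k ∧ ∀ ζ : ℝ, M k ≤ |ζ| →
    ω k (δ0 + N * Real.sqrt δ0) ≤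
      μ / 4 * ζ ^ 2 - 2 * cConst L Lv (K0set a b K (δ0 + N * Real.sqrt δ0)) k * (|ζ| + 1)) ∧
  (∀ k : ℝ, 0 ≤ k → 0 < α k ∧ ∃ C > (0:ℝ),
    HolderOn L (tripleSet (K0set a b K (δ0 + N * Real.sqrt δ0))
      (Icc (-(k + M k)) (k + M k))) C (α k)) ∧
  (∀ k : ℝ, 0 ≤ k →
    Tendsto (fun ε : ℝ => ∫ ξ in (0:ℝ)..(Real.exp 1 * ε), omegaBar ω N α k ξ / ξ)
      (nhdsWithin 0 (Ioi 0)) (nhds 0))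

/-- Condition (H^{K,δ₀}_ω). -/
def Hcond (a b : ℝ) (L Lv : ℝ → ℝ → ℝ → ℝ) (μ : ℝ) (K : Set (ℝ × ℝ))
    (ω : ℝ → ℝ → ℝ) (N δ0 : ℝ) : Prop :=
  ∃ M α : ℝ → ℝ, HcondWith a b L Lv μ K ω N δ0 M α

/-- `u` is differentiable at `x` (relative to `[a,b]`). -/
def DiffAt (a b : ℝ) (u : ℝ → ℝ) (x : ℝ) : Prop :=
  ∃ d : ℝ, HasDerivWithinAt u d (Icc a b) x

/-- The difference quotients of `u` at `x` tend to `+∞`. -/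
def SlopeTendstoTop (a b : ℝ) (u : ℝ → ℝ) (x : ℝ) : Prop :=
  Tendsto (fun y => (u y - u x) / (y - x)) (nhdsWithin x (Icc a b \ {x})) atTop

/-- The difference quotients of `u` at `x` tend to `-∞`. -/
def SlopeTendstoBot (a b : ℝ) (u : ℝ → ℝ) (x : ℝ) : Prop :=
  Tendsto (fun y => (u y - u x) / (y - x)) (nhdsWithin x (Icc a b \ {x})) atBot

/-- Tonelli's partial regularity of `u` on `[a,b]`. -/
def TonelliReg (a b : ℝ) (u : ℝ → ℝ) : Prop :=
  (∃ V : Set ℝ, IsOpen V ∧ {x | x ∈ Icc a b ∧ DiffAt a b u x} = V ∩ Icc a b) ∧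
  (∀ x ∈ Icc a b, (¬ DiffAt a b u x ↔ (SlopeTendstoTop a b u x ∨ SlopeTendstoBot a b u x))) ∧
  (∃ g : ℝ → EReal, ContinuousOn g (Icc a b) ∧
    (∀ x ∈ Icc a b, ∀ d : ℝ, HasDerivWithinAt u d (Icc a b) x → g x = (d : EReal)) ∧
    (∀ x ∈ Icc a b, SlopeTendstoTop a b u x → g x = ⊤) ∧
    (∀ x ∈ Icc a b, SlopeTendstoBot a b u x → g x = ⊥))

/-- Sup norm of `h` on `[a,b]`. -/
def supNorm (a b : ℝ) (h : ℝ → ℝ) : ℝ := sSup ((fun x => |h x|) '' Icc a b)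

/-- Modulus of continuity of `h` on `[a,b]`. -/
def modulus (a b : ℝ) (h : ℝ → ℝ) (ε : ℝ) : ℝ :=
  sSup {d : ℝ | ∃ x ∈ Icc a b, ∃ y ∈ Icc a b, |x - y| ≤ ε ∧ d = |h x - h y|}

/-- The admissible class `𝓐_{f,g}`. -/
def Adm (a b : ℝ) (f g : ℝ → ℝ) (A B : ℝ) (u : ACFn a b) : Prop :=
  u.toFun a = A ∧ u.toFun b = B ∧ ∀ x ∈ Icc a b, f x ≤ u.toFun x ∧ u.toFun x ≤ g x

/-- `u ∈ 𝒮_{f,g}`: `u` solves the variational obstacle problem. -/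
def Sol (a b : ℝ) (L : ℝ → ℝ → ℝ → ℝ) (f g : ℝ → ℝ) (A B : ℝ) (u : ACFn a b) : Prop :=
  Adm a b f g A B u ∧ ∀ v : ACFn a b, Adm a b f g A B v → JL a b L u ≤ JL a b L v

/-- One-dimensional strong-convexity Taylor lower bound. -/
lemma quad_taylor_aux (f g G : ℝ → ℝ) (μ : ℝ)
    (hf : ∀ v, HasDerivAt f (g v) v)
    (hg : ∀ v, HasDerivAt g (G v) v)
    (hG : ∀ v, μ ≤ G v) (v1 v2 : ℝ) :
    f v1 + g v1 * (v2 - v1) + μ / 2 * (v2 - v1) ^ 2 ≤ f v2 := by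
  set h : ℝ → ℝ := fun w => f w - g v1 * w - μ / 2 * (w - v1) ^ 2 with hh_def
  set h' : ℝ → ℝ := fun w => g w - g v1 - μ * (w - v1) with hh'_def
  have hh : ∀ w, HasDerivAt h (h' w) w := by
    intro w
    have h1 : HasDerivAt (fun w : ℝ => g v1 * w) (g v1 * 1) w :=
      (hasDerivAt_id w).const_mul (g v1)
    have h2 : HasDerivAt (fun w : ℝ => (w - v1) ^ 2) (2 * (w - v1) ^ 1 * 1) w :=
      ((hasDerivAt_id w).sub_const v1).pow 2
    have h3 : HasDerivAt (fun w : ℝ => μ / 2 * (w - v1) ^ 2)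
        (μ / 2 * (2 * (w - v1) ^ 1 * 1)) w := h2.const_mul (μ / 2)
    have := ((hf w).sub h1).sub h3
    convert this using 1
    show g w - g v1 - μ * (w - v1) = _; ring
    all_goals rfl
  have hm : Monotone (fun w => g w - μ * w) := by
    apply monotone_of_hasDerivAt_nonneg (f' := fun w => G w - μ * 1)
    · intro w
      exact (hg w).sub ((hasDerivAt_id w).const_mul μ)
    · intro w
      simp only [Pi.zero_apply]
      have := hG w; simp; linarith
  rcases le_total v1 v2 with hle | hle
  · have hmono : MonotoneOn h (Ici v1) := by
      apply monotoneOn_of_hasDerivWithinAt_nonneg (f' := h') (convex_Ici v1)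
      · intro x _; exact (hh x).continuousAt.continuousWithinAt
      · intro x _; exact (hh x).hasDerivWithinAt.mono interior_subset
      · intro x hx
        rw [interior_Ici] at hx
        have h2 : g v1 - μ * v1 ≤ g x - μ * x := hm (le_of_lt hx)
        simp only [hh'_def]; linarith
    have := hmono (self_mem_Ici) hle hle
    simp only [hh_def] at this
    nlinarith [this]
  · have hanti : AntitoneOn h (Iic v1) := by
      apply antitoneOn_of_hasDerivWithinAt_nonpos (f' := h') (convex_Iic v1)
      · intro x _; exact (hh x).continuousAt.continuousWithinAt
      · intro x _; exact (hh x).hasDerivWithinAt.mono interior_subset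
      · intro x hx
        rw [interior_Iic] at hx
        have h2 : g x - μ * x ≤ g v1 - μ * v1 := hm (le_of_lt hx)
        simp only [hh'_def]; linarith
    have := hanti hle (self_mem_Iic) hle
    simp only [hh_def] at this
    nlinarith [this]

/-- Boundedness of a continuous Lagrangian on a compact cylinder. -/
lemma boundL_aux {a b : ℝ} {L : ℝ → ℝ → ℝ → ℝ} (hLc : ContL a b L)
    {K0 : Set (ℝ × ℝ)} (hK0 : IsCompact K0)
    (hK0sub : K0 ⊆ Icc a b ×ˢ (univ : Set ℝ)) (K : ℝ) :
    ∃ C : ℝ, ∀ q ∈ K0, ∀ v ∈ Icc (-K) K, |L q.1 q.2 v| ≤ C := by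
  set φ : (ℝ × ℝ) × ℝ → ℝ × ℝ × ℝ := fun q => (q.1.1, q.1.2, q.2) with hφ
  have hφc : Continuous φ := by fun_prop
  have hS : IsCompact (K0 ×ˢ Icc (-K) K) := hK0.prod isCompact_Icc
  have hT : IsCompact (φ '' (K0 ×ˢ Icc (-K) K)) := hS.image hφc
  have hTsub : φ '' (K0 ×ˢ Icc (-K) K) ⊆ Icc a b ×ˢ (univ : Set (ℝ × ℝ)) := by
    rintro _ ⟨q, hq, rfl⟩
    exact ⟨(hK0sub hq.1).1, trivial⟩
  obtain ⟨C, hC⟩ := hT.exists_bound_of_continuousOn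
    ((hLc.mono hTsub) : ContinuousOn (fun p : ℝ × ℝ × ℝ => L p.1 p.2.1 p.2.2) _)
  refine ⟨C, fun q hq v hv => ?_⟩
  have := hC (φ (q, v)) ⟨(q, v), ⟨hq, hv⟩, rfl⟩
  simpa [hφ, Real.norm_eq_abs] using this

/-- First estimate in Step 1 of the proof of Lemma 3.1: the lower bound
`L_{(x₁,u₁,p)}(x₂,u₂,p+ζ) - L_{(x₁,u₁,p)}(x₃,u₃,p) ≥ (μ/2)ζ² - 2c(k)(|ζ|+1)`. -/

theorem statement15
    (a b : ℝ) (hab : a < b)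
    (L Lv Lvv : ℝ → ℝ → ℝ → ℝ) (μ : ℝ)
    (hLc : ContL a b L) (hH2 : H2 a b L Lv Lvv μ)
    (K0 : Set (ℝ × ℝ)) (hK0 : IsCompact K0) (hK0sub : K0 ⊆ Icc a b ×ˢ (univ : Set ℝ))
    (k : ℝ) (hk : 0 ≤ k) :
    ∀ p1 ∈ K0, ∀ p2 ∈ K0, ∀ p3 ∈ K0, ∀ p : ℝ, |p| ≤ k → ∀ ζ : ℝ,
      μ / 2 * ζ ^ 2 - 2 * cConst L Lv K0 k * (|ζ| + 1) ≤
        (L p2.1 p2.2 (p + ζ) - Lv p1.1 p1.2 p * (p + ζ))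
          - (L p3.1 p3.2 p - Lv p1.1 p1.2 p * p) := by
  intro p1 h1 p2 h2 p3 h3 p hp ζ
  obtain ⟨hμ, hLv, hLvv, _, hμle⟩ := hH2
  -- Taylor / strong convexity for points of K0
  have quad : ∀ q ∈ K0, ∀ v1 v2 : ℝ,
      L q.1 q.2 v1 + Lv q.1 q.2 v1 * (v2 - v1) + μ / 2 * (v2 - v1) ^ 2 ≤ L q.1 q.2 v2 := by
    intro q hq v1 v2
    have hx : q.1 ∈ Icc a b := (hK0sub hq).1
    exact quad_taylor_aux (L q.1 q.2) (Lv q.1 q.2) (Lvv q.1 q.2) μ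
      (fun v => hLv q.1 hx q.2 v) (fun v => hLvv q.1 hx q.2 v)
      (fun v => hμle q.1 hx q.2 v) v1 v2
  -- Uniform bound on |L| on K0 × [-(k+1), k+1]
  obtain ⟨C, hC⟩ := boundL_aux hLc hK0 hK0sub (k + 1)
  have hC0 : 0 ≤ C := by
    have := hC p1 h1 0 (by constructor <;> [linarith; linarith])
    exact le_trans (abs_nonneg _) this
  -- Bound on |Lv| on K0 × [-k, k]
  have hLvb : ∀ q ∈ K0, ∀ v : ℝ, |v| ≤ k → |Lv q.1 q.2 v| ≤ 2 * C := by
    intro q hq v hv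
    have hv' := abs_le.mp hv
    have hm1 : v ∈ Icc (-(k+1)) (k+1) := by constructor <;> linarith
    have hm2 : v + 1 ∈ Icc (-(k+1)) (k+1) := by constructor <;> linarith
    have hm3 : v - 1 ∈ Icc (-(k+1)) (k+1) := by constructor <;> linarith
    have b1 := abs_le.mp (hC q hq v hm1)
    have b2 := abs_le.mp (hC q hq (v + 1) hm2)
    have b3 := abs_le.mp (hC q hq (v - 1) hm3)
    have q1 := quad q hq v (v + 1)
    have q2 := quad q hq v (v - 1)
    rw [abs_le]
    constructor <;> nlinarith
  -- Bound via the sSup defining cConst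
  have hcc : ∀ q ∈ K0, ∀ v : ℝ, |v| ≤ k →
      |L q.1 q.2 v| ≤ cConst L Lv K0 k ∧ |Lv q.1 q.2 v| ≤ cConst L Lv K0 k := by
    intro q hq v hv
    have hv' := abs_le.mp hv
    have hmem : max |L q.1 q.2 v| |Lv q.1 q.2 v| ∈
        ((fun q : (ℝ × ℝ) × ℝ => max |L q.1.1 q.1.2 q.2| |Lv q.1.1 q.1.2 q.2|) ''
          (K0 ×ˢ Icc (-k) k)) := ⟨(q, v), ⟨hq, hv'.1, hv'.2⟩, rfl⟩
    have hbdd : BddAbove ((fun q : (ℝ × ℝ) × ℝ =>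
        max |L q.1.1 q.1.2 q.2| |Lv q.1.1 q.1.2 q.2|) '' (K0 ×ˢ Icc (-k) k)) := by
      refine ⟨2 * C, ?_⟩
      rintro _ ⟨r, ⟨hr, hrv⟩, rfl⟩
      have hrv' : |r.2| ≤ k := abs_le.mpr ⟨hrv.1, hrv.2⟩
      have hrm : r.2 ∈ Icc (-(k+1)) (k+1) := by
        have := abs_le.mp hrv'; constructor <;> linarith
      exact max_le (le_trans (hC r.1 hr r.2 hrm) (by linarith)) (hLvb r.1 hr r.2 hrv')
    have hle := le_csSup hbdd hmem
    rw [cConst]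
    exact ⟨le_trans (le_max_left _ _) hle, le_trans (le_max_right _ _) hle⟩
  set c := cConst L Lv K0 k with hc_def
  obtain ⟨hL2, hLv2⟩ := hcc p2 h2 p hp
  obtain ⟨hL3, _⟩ := hcc p3 h3 p hp
  obtain ⟨_, hLv1⟩ := hcc p1 h1 p hp
  have key := quad p2 h2 p (p + ζ)
  have hsimp : p + ζ - p = ζ := by ring
  rw [hsimp] at key
  have e2 := abs_le.mp hL2
  have e3 := abs_le.mp hL3
  have ev2 := abs_le.mp hLv2
  have ev1 := abs_le.mp hLv1
  have hz := abs_le.mp (le_refl |ζ|)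
  have hz1 := le_abs_self ζ
  have hz2 := neg_abs_le ζ
  have hprod : -(2 * c * |ζ|) ≤ (Lv p2.1 p2.2 p - Lv p1.1 p1.2 p) * ζ := by
    have habs : |(Lv p2.1 p2.2 p - Lv p1.1 p1.2 p) * ζ| ≤ 2 * c * |ζ| := by
      rw [abs_mul]
      have h1 : |Lv p2.1 p2.2 p - Lv p1.1 p1.2 p| ≤ 2 * c := by
        calc |Lv p2.1 p2.2 p - Lv p1.1 p1.2 p| ≤ |Lv p2.1 p2.2 p| + |Lv p1.1 p1.2 p| :=
          abs_sub _ _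
        _ ≤ 2 * c := by linarith
      exact mul_le_mul_of_nonneg_right h1 (abs_nonneg ζ)
    have := (abs_le.mp habs).1
    linarith
  nlinarith [key, hprod]
end
end

section
/- Let a<b, let L ∈ C([a,b]×ℝ×ℝ) satisfy (H1) and (H2) with constant μ>0, let K0 ⊂ [a,b]×ℝ be compact, let k ≥ 0 and M>0, and let C1,α>0 be the constants of (H1) for the compact G = K0×[−(k+M),k+M]. Then for all ε ≥ 0, all (x1,u1),(x2,u2),(x3,u3) ∈ K0 with |x1−x2|+|u1−u2| ≤ ε and |x1−x3|+|u1−u3| ≤ ε, all p with |p| ≤ k, and all ζ with |ζ| ≤ M: L_{(x1,u1,p)}(x2,u2,p+ζ) − L_{(x1,u1,p)}(x3,u3,p) ≥ −2C1 ε^α + (μ/2)ζ², where L_{(t,y,p)}(x,u,v) := L(x,u,v) − L_v(t,y,p)v. -/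
open MeasureTheory Set Filter Topology
open scoped ENNReal

noncomputable section

/-- Strong convexity estimate: if `f'' ≥ μ` then
`f (p+ζ) ≥ f p + f' p * ζ + μ/2 * ζ²`. -/
lemma strong_convex_aux (f f' f'' : ℝ → ℝ) (μ : ℝ)
    (hd : ∀ v, HasDerivAt f (f' v) v)
    (hd' : ∀ v, HasDerivAt f' (f'' v) v)
    (hμ : ∀ v, μ ≤ f'' v) (p ζ : ℝ) :
    f p + f' p * ζ + μ / 2 * ζ ^ 2 ≤ f (p + ζ) := by
  set g : ℝ → ℝ := fun v => f v - f p - f' p * (v - p) - μ / 2 * (v - p) ^ 2 with hg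
  set g' : ℝ → ℝ := fun v => f' v - f' p - μ * (v - p) with hg'
  have hgd : ∀ v, HasDerivAt g (g' v) v := by
    intro v
    have : HasDerivAt g (f' v - 0 - f' p * (1 - 0) - μ / 2 * (2 * (v - p) ^ 1 * (1 - 0))) v := by
      exact (((hd v).sub (hasDerivAt_const _ _)).sub
        (((hasDerivAt_id v).sub (hasDerivAt_const _ _)).const_mul _)).sub
        ((((hasDerivAt_id v).sub (hasDerivAt_const _ _)).pow 2).const_mul _)
    convert this using 1; ring
  have hg'd : ∀ v, HasDerivAt g' (f'' v - μ) v := by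
    intro v
    have : HasDerivAt g' (f'' v - 0 - μ * (1 - 0)) v :=
      ((hd' v).sub (hasDerivAt_const _ _)).sub
        (((hasDerivAt_id v).sub (hasDerivAt_const _ _)).const_mul _)
    convert this using 1; ring
  have hg'mono : Monotone g' := by
    apply monotone_of_deriv_nonneg
    · exact fun v => (hg'd v).differentiableAt
    · intro v
      rw [(hg'd v).deriv]
      linarith [hμ v]
  have hg'p : g' p = 0 := by simp [hg']
  have hgp : g p = 0 := by simp [hg]
  have key : 0 ≤ g (p + ζ) := by
    rcases le_or_gt 0 ζ with hζ | hζ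
    · have hmono : MonotoneOn g (Icc p (p + ζ)) := by
        apply monotoneOn_of_deriv_nonneg (convex_Icc _ _)
          (Continuous.continuousOn
            (Differentiable.continuous fun v => (hgd v).differentiableAt))
        · intro v _; exact (hgd v).differentiableAt.differentiableWithinAt
        · intro v hv
          rw [interior_Icc] at hv
          rw [(hgd v).deriv]
          have := hg'mono (le_of_lt hv.1 : p ≤ v)
          rw [hg'p] at this; exact this
      have := hmono (left_mem_Icc.2 (by linarith)) (right_mem_Icc.2 (by linarith))
        (by linarith : p ≤ p + ζ)
      rwa [hgp] at this
    · have hanti : AntitoneOn g (Icc (p + ζ) p) := by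
        apply antitoneOn_of_deriv_nonpos (convex_Icc _ _)
          (Continuous.continuousOn
            (Differentiable.continuous fun v => (hgd v).differentiableAt))
        · intro v _; exact (hgd v).differentiableAt.differentiableWithinAt
        · intro v hv
          rw [interior_Icc] at hv
          rw [(hgd v).deriv]
          have := hg'mono (le_of_lt hv.2 : v ≤ p)
          rw [hg'p] at this; exact this
      have := hanti (left_mem_Icc.2 (by linarith)) (right_mem_Icc.2 (by linarith))
        (by linarith : p + ζ ≤ p)
      rwa [hgp] at this
  have : 0 ≤ f (p + ζ) - f p - f' p * (p + ζ - p) - μ / 2 * (p + ζ - p) ^ 2 := key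
  nlinarith [this]

/-- Second estimate in Step 1 of the proof of Lemma 3.1: for `|ζ| ≤ M`,
`L_{(x₁,u₁,p)}(x₂,u₂,p+ζ) - L_{(x₁,u₁,p)}(x₃,u₃,p) ≥ -2C₁ε^α + (μ/2)ζ²`. -/
theorem statement16
    (a b : ℝ) (hab : a < b)
    (L Lv Lvv : ℝ → ℝ → ℝ → ℝ) (μ : ℝ)
    (hLc : ContL a b L) (hH1 : H1 a b L) (hH2 : H2 a b L Lv Lvv μ)
    (K0 : Set (ℝ × ℝ)) (hK0 : IsCompact K0) (hK0sub : K0 ⊆ Icc a b ×ˢ (univ : Set ℝ))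
    (k M : ℝ) (hk : 0 ≤ k) (hM : 0 < M)
    (C1 α : ℝ) (hC1 : 0 < C1) (hα : 0 < α)
    (hHol : HolderOn L (tripleSet K0 (Icc (-(k + M)) (k + M))) C1 α) :
    ∀ ε : ℝ, 0 ≤ ε →
    ∀ p1 ∈ K0, ∀ p2 ∈ K0, ∀ p3 ∈ K0,
      |p1.1 - p2.1| + |p1.2 - p2.2| ≤ ε → |p1.1 - p3.1| + |p1.2 - p3.2| ≤ ε →
      ∀ p : ℝ, |p| ≤ k → ∀ ζ : ℝ, |ζ| ≤ M →
        -2 * C1 * ε ^ α + μ / 2 * ζ ^ 2 ≤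
          (L p2.1 p2.2 (p + ζ) - Lv p1.1 p1.2 p * (p + ζ))
            - (L p3.1 p3.2 p - Lv p1.1 p1.2 p * p) := by
  intro ε hε p1 hp1 p2 hp2 p3 hp3 h12 h13 p hp ζ hζ
  obtain ⟨hμ, hLv, hLvv, _, hμle⟩ := hH2
  have hx1 : p1.1 ∈ Icc a b := (hK0sub hp1).1
  -- membership of the relevant triples
  have hpk : |p| ≤ k + M := le_trans hp (by linarith)
  have hpζ : |p + ζ| ≤ k + M := le_trans (abs_add_le p ζ) (by linarith)
  have hm1 : (p1.1, p1.2, p) ∈ tripleSet K0 (Icc (-(k + M)) (k + M)) :=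
    ⟨hp1, abs_le.1 hpk⟩
  have hm1' : (p1.1, p1.2, p + ζ) ∈ tripleSet K0 (Icc (-(k + M)) (k + M)) :=
    ⟨hp1, abs_le.1 hpζ⟩
  have hm2 : (p2.1, p2.2, p + ζ) ∈ tripleSet K0 (Icc (-(k + M)) (k + M)) :=
    ⟨hp2, abs_le.1 hpζ⟩
  have hm3 : (p3.1, p3.2, p) ∈ tripleSet K0 (Icc (-(k + M)) (k + M)) :=
    ⟨hp3, abs_le.1 hpk⟩
  -- Hölder estimates
  have hεα : ∀ c : ℝ, 0 ≤ c → c ≤ ε → c ^ α ≤ ε ^ α := fun c hc hcε =>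
    Real.rpow_le_rpow hc hcε (le_of_lt hα)
  have hest2 : |L p2.1 p2.2 (p + ζ) - L p1.1 p1.2 (p + ζ)| ≤ C1 * ε ^ α := by
    have := hHol _ hm2 _ hm1'
    simp only [sub_self, abs_zero, add_zero] at this
    refine le_trans this ?_
    have h0 : (0:ℝ) ≤ |p2.1 - p1.1| + |p2.2 - p1.2| := by positivity
    have h1 : |p2.1 - p1.1| + |p2.2 - p1.2| ≤ ε := by
      rw [abs_sub_comm p2.1, abs_sub_comm p2.2]; exact h12
    exact mul_le_mul_of_nonneg_left (hεα _ h0 h1) (le_of_lt hC1)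
  have hest3 : |L p1.1 p1.2 p - L p3.1 p3.2 p| ≤ C1 * ε ^ α := by
    have := hHol _ hm1 _ hm3
    simp only [sub_self, abs_zero, add_zero] at this
    refine le_trans this ?_
    have h0 : (0:ℝ) ≤ |p1.1 - p3.1| + |p1.2 - p3.2| := by positivity
    exact mul_le_mul_of_nonneg_left (hεα _ h0 h13) (le_of_lt hC1)
  -- strong convexity at (p1.1, p1.2)
  have hconv : L p1.1 p1.2 p + Lv p1.1 p1.2 p * ζ + μ / 2 * ζ ^ 2 ≤
      L p1.1 p1.2 (p + ζ) :=
    strong_convex_aux (fun v => L p1.1 p1.2 v) (fun v => Lv p1.1 p1.2 v)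
      (fun v => Lvv p1.1 p1.2 v) μ (hLv p1.1 hx1 p1.2) (hLvv p1.1 hx1 p1.2)
      (hμle p1.1 hx1 p1.2) p ζ
  have e2 := abs_le.1 hest2
  have e3 := abs_le.1 hest3
  nlinarith [e2.1, e3.1, hconv]
end
end

section
/- Let a<b, let f,g ∈ C¹([a,b]) with f<g pointwise, let A,B ∈ ℝ, and let u ∈ A_{f,g}. For s<t in [a,b], define v_{s,t}(x) := u_{s,t}(x) if f(x) ≤ u_{s,t}(x) ≤ g(x), v_{s,t}(x) := f(x) if f(x) > u_{s,t}(x), and v_{s,t}(x) := g(x) if u_{s,t}(x) > g(x) (equivalently v_{s,t} = max(f, min(u_{s,t}, g))). Then v_{s,t} is absolutely continuous on [a,b], v_{s,t}(x) = u(x) for all x ∈ [a,b]∖(s,t), and v_{s,t} ∈ A_{f,g}. -/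
open MeasureTheory Set Filter Topology
open scoped ENNReal

noncomputable section

private lemma abs_max_le_max_abs (p q : ℝ) : |max p q| ≤ max |p| |q| := by
  rcases le_total p q with h | h
  · rw [max_eq_right h]; exact le_max_right _ _
  · rw [max_eq_left h]; exact le_max_left _ _

private lemma abs_min_le_max_abs (p q : ℝ) : |min p q| ≤ max |p| |q| := by
  rcases le_total p q with h | h
  · rw [min_eq_left h]; exact le_max_left _ _
  · rw [min_eq_right h]; exact le_max_right _ _

private lemma hasDerivAt_max_of_eq {f g : ℝ → ℝ} {x d : ℝ}
    (hf : HasDerivAt f d x) (hg : HasDerivAt g d x) (hfg : f x = g x) :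
    HasDerivAt (fun y => max (f y) (g y)) d x := by
  rw [hasDerivAt_iff_isLittleO] at hf hg ⊢
  rw [Asymptotics.isLittleO_iff] at hf hg ⊢
  intro c hc
  filter_upwards [hf hc, hg hc] with y hy1 hy2
  have key : max (f y) (g y) - max (f x) (g x) - (y - x) • d
      = max (f y - f x - (y - x) • d) (g y - g x - (y - x) • d) := by
    rw [hfg, max_self, max_sub_sub_right, max_sub_sub_right]
  rw [Real.norm_eq_abs, key]
  exact (abs_max_le_max_abs _ _).trans
    (max_le (by simpa using hy1) (by simpa using hy2))

private lemma hasDerivAt_min_of_eq {f g : ℝ → ℝ} {x d : ℝ}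
    (hf : HasDerivAt f d x) (hg : HasDerivAt g d x) (hfg : f x = g x) :
    HasDerivAt (fun y => min (f y) (g y)) d x := by
  rw [hasDerivAt_iff_isLittleO] at hf hg ⊢
  rw [Asymptotics.isLittleO_iff] at hf hg ⊢
  intro c hc
  filter_upwards [hf hc, hg hc] with y hy1 hy2
  have key : min (f y) (g y) - min (f x) (g x) - (y - x) • d
      = min (f y - f x - (y - x) • d) (g y - g x - (y - x) • d) := by
    rw [hfg, min_self, min_sub_sub_right, min_sub_sub_right]
  rw [Real.norm_eq_abs, key]
  exact (abs_min_le_max_abs _ _).trans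
    (max_le (by simpa using hy1) (by simpa using hy2))

private lemma countable_of_eventually_notMem {s : Set ℝ}
    (h : ∀ x ∈ s, ∀ᶠ y in 𝓝[≠] x, y ∉ s) : s.Countable := by
  haveI : DiscreteTopology s := by
    rw [discreteTopology_subtype_iff]
    intro x hx
    rw [← Filter.empty_mem_iff_bot]
    have h1 : {y : ℝ | y ∉ s} ∈ 𝓝[≠] x ⊓ Filter.principal s :=
      Filter.mem_inf_of_left (h x hx)
    have h2 : s ∈ 𝓝[≠] x ⊓ Filter.principal s :=
      Filter.mem_inf_of_right (Filter.mem_principal_self s)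
    have h3 := Filter.inter_mem h1 h2
    have he : {y : ℝ | y ∉ s} ∩ s = ∅ := by ext y; simp
    rwa [he] at h3
  have : Countable s := TopologicalSpace.separableSpace_iff_countable.mp inferInstance
  exact Set.countable_coe_iff.mp this

/-- Step 1 of the proof of Lemma 2.8: truncating `u_{s,t}` between the obstacles yields
an absolutely continuous competitor `v_{s,t} ∈ 𝓐_{f,g}` that agrees with `u`
off `(s,t)`. -/
theorem statement19
    (a b : ℝ) (hab : a < b)
    (f g f' g' : ℝ → ℝ)
    (hf : ∀ x ∈ Icc a b, HasDerivWithinAt f (f' x) (Icc a b) x)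
    (hf' : ContinuousOn f' (Icc a b))
    (hg : ∀ x ∈ Icc a b, HasDerivWithinAt g (g' x) (Icc a b) x)
    (hg' : ContinuousOn g' (Icc a b))
    (hfg : ∀ x ∈ Icc a b, f x < g x)
    (A B : ℝ) (u : ACFn a b) (hu : Adm a b f g A B u)
    (s t : ℝ) (hs : s ∈ Icc a b) (ht : t ∈ Icc a b) (hst : s < t) :
    ∃ v : ACFn a b,
      (∀ x ∈ Icc a b, v.toFun x = max (f x) (min (u.modFun s t x) (g x))) ∧
      (∀ x ∈ Icc a b, x ∉ Ioo s t → v.toFun x = u.toFun x) ∧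
      Adm a b f g A B v := by
  obtain ⟨hua, hub, hbound⟩ := hu
  have ha' : a ∈ Icc a b := left_mem_Icc.mpr hab.le
  have hb' : b ∈ Icc a b := right_mem_Icc.mpr hab.le
  set k : ℝ := u.kk s t with hkdef
  set l : ℝ → ℝ := fun x => u.toFun s + k * (x - s) with hldef
  have hls : l s = u.toFun s := by simp [hldef]
  have hlt : l t = u.toFun t := by
    have hst' : s - t ≠ 0 := sub_ne_zero.mpr hst.ne
    show u.toFun s + u.kk s t * (t - s) = u.toFun t
    rw [ACFn.kk]
    field_simp
    ring
  have hlk : ∀ x : ℝ, HasDerivAt l k x := by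
    intro x
    have h := ((((hasDerivAt_id x).sub_const s).const_mul k).const_add (u.toFun s))
    simpa [hldef] using h
  have hcl : Continuous l := by
    rw [hldef]
    exact continuous_const.add (continuous_const.mul (continuous_id.sub continuous_const))
  have hmodu : ∀ x, x ∉ Ioo s t → u.modFun s t x = u.toFun x := fun x hx => if_neg hx
  have hmodl : ∀ x ∈ Icc s t, u.modFun s t x = l x := by
    intro x hx
    rcases eq_or_lt_of_le hx.1 with h1 | h1
    · rw [← h1, hmodu s (fun h => lt_irrefl s h.1), hls]
    · rcases eq_or_lt_of_le hx.2 with h2 | h2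
      · rw [h2, hmodu t (fun h => lt_irrefl t h.2), hlt]
      · show (if x ∈ Ioo s t then u.toFun s + u.kk s t * (x - s) else u.toFun x) = l x
        rw [if_pos ⟨h1, h2⟩]
  have hcf : ContinuousOn f (Icc a b) := fun x hx => (hf x hx).continuousWithinAt
  have hcg : ContinuousOn g (Icc a b) := fun x hx => (hg x hx).continuousWithinAt
  have hIoo : Ioo s t ⊆ Ioo a b := Ioo_subset_Ioo hs.1 ht.2
  have hst_sub : Icc s t ⊆ Icc a b := Icc_subset_Icc hs.1 ht.2
  have hIoo_sub : Ioo s t ⊆ Icc a b := fun x hx => Ioo_subset_Icc_self (hIoo hx)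
  have hfD : ∀ x ∈ Ioo s t, HasDerivAt f (f' x) x := fun x hx =>
    (hf x (hIoo_sub hx)).hasDerivAt (Icc_mem_nhds (hIoo hx).1 (hIoo hx).2)
  have hgD : ∀ x ∈ Ioo s t, HasDerivAt g (g' x) x := fun x hx =>
    (hg x (hIoo_sub hx)).hasDerivAt (Icc_mem_nhds (hIoo hx).1 (hIoo hx).2)
  set D : ℝ → ℝ := fun x => if l x < f x then f' x else if g x < l x then g' x else k
    with hDdef
  set q : ℝ → ℝ := fun x => max (f x) (min (l x) (g x)) with hqdef
  set E1 : Set ℝ := {x | x ∈ Ioo s t ∧ f x = l x ∧ f' x ≠ k} with hE1def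
  set E2 : Set ℝ := {x | x ∈ Ioo s t ∧ g x = l x ∧ g' x ≠ k} with hE2def
  have hE1c : E1.Countable := by
    apply countable_of_eventually_notMem
    rintro x ⟨hxI, hfe, hfne⟩
    have hd : HasDerivAt (fun y => f y - l y) (f' x - k) x := (hfD x hxI).sub (hlk x)
    filter_upwards [hd.eventually_ne (sub_ne_zero.mpr hfne)] with y hy
    rintro ⟨-, hfy, -⟩
    exact hy (by show f y - l y = f x - l x; rw [hfy, hfe]; ring)
  have hE2c : E2.Countable := by
    apply countable_of_eventually_notMem
    rintro x ⟨hxI, hge, hgne⟩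
    have hd : HasDerivAt (fun y => g y - l y) (g' x - k) x := (hgD x hxI).sub (hlk x)
    filter_upwards [hd.eventually_ne (sub_ne_zero.mpr hgne)] with y hy
    rintro ⟨-, hgy, -⟩
    exact hy (by show g y - l y = g x - l x; rw [hgy, hge]; ring)
  have hqD : ∀ x ∈ Ioo s t, x ∉ E1 → x ∉ E2 → HasDerivAt q (D x) x := by
    intro x hx hxE1 hxE2
    have hfu : f x < g x := hfg x (hIoo_sub hx)
    have hfCx : ContinuousAt f x := (hfD x hx).continuousAt
    have hgCx : ContinuousAt g x := (hgD x hx).continuousAt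
    rcases lt_trichotomy (f x) (l x) with h1 | h1 | h1
    · rcases lt_trichotomy (l x) (g x) with h2 | h2 | h2
      · have hev : ∀ᶠ y in 𝓝 x, q y = l y := by
          filter_upwards [hfCx.eventually_lt hcl.continuousAt h1,
            hcl.continuousAt.eventually_lt hgCx h2] with y hy1 hy2
          simp only [hqdef]
          rw [min_eq_left hy2.le, max_eq_right hy1.le]
        have hD : D x = k := by
          simp only [hDdef]
          rw [if_neg (not_lt.mpr h1.le), if_neg (not_lt.mpr h2.le)]
        rw [hD]
        exact (hlk x).congr_of_eventuallyEq hev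
      · have hgk : g' x = k := by
          by_contra hne
          exact hxE2 ⟨hx, h2.symm, hne⟩
        have hev : ∀ᶠ y in 𝓝 x, q y = min (l y) (g y) := by
          filter_upwards [hfCx.eventually_lt hcl.continuousAt h1,
            hfCx.eventually_lt hgCx hfu] with y hy1 hy2
          simp only [hqdef]
          rw [max_eq_right (le_min hy1.le hy2.le)]
        have hD : D x = k := by
          simp only [hDdef]
          rw [if_neg (not_lt.mpr h1.le), if_neg (not_lt.mpr h2.le)]
        rw [hD]
        exact (hasDerivAt_min_of_eq (hlk x) (hgk ▸ hgD x hx) h2).congr_of_eventuallyEq hev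
      · have hev : ∀ᶠ y in 𝓝 x, q y = g y := by
          filter_upwards [hgCx.eventually_lt hcl.continuousAt h2,
            hfCx.eventually_lt hgCx hfu] with y hy1 hy2
          simp only [hqdef]
          rw [min_eq_right hy1.le, max_eq_right hy2.le]
        have hD : D x = g' x := by
          simp only [hDdef]
          rw [if_neg (not_lt.mpr h1.le), if_pos h2]
        rw [hD]
        exact (hgD x hx).congr_of_eventuallyEq hev
    · have hfk : f' x = k := by
        by_contra hne
        exact hxE1 ⟨hx, h1, hne⟩
      have h2 : l x < g x := h1 ▸ hfu
      have hev : ∀ᶠ y in 𝓝 x, q y = max (f y) (l y) := by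
        filter_upwards [hcl.continuousAt.eventually_lt hgCx h2] with y hy
        simp only [hqdef]
        rw [min_eq_left hy.le]
      have hD : D x = k := by
        simp only [hDdef]
        rw [if_neg (not_lt.mpr h1.le), if_neg (not_lt.mpr h2.le)]
      rw [hD]
      exact (hasDerivAt_max_of_eq (hfk ▸ hfD x hx) (hlk x) h1).congr_of_eventuallyEq hev
    · have hev : ∀ᶠ y in 𝓝 x, q y = f y := by
        filter_upwards [hcl.continuousAt.eventually_lt hfCx h1,
          hfCx.eventually_lt hgCx hfu] with y hy1 hy2
        simp only [hqdef]
        rw [max_eq_left (le_trans (min_le_left _ _) hy1.le)]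
      have hD : D x = f' x := by
        simp only [hDdef]
        rw [if_pos h1]
      rw [hD]
      exact (hfD x hx).congr_of_eventuallyEq hev
  have hqcont : ContinuousOn q (Icc s t) := by
    simp only [hqdef]
    exact (hcf.mono hst_sub).sup ((hcl.continuousOn).inf (hcg.mono hst_sub))
  -- integrability of D
  have hfint : IntegrableOn f' (Icc a b) := hf'.integrableOn_Icc
  have hgint : IntegrableOn g' (Icc a b) := hg'.integrableOn_Icc
  set U1 : Set ℝ := Ioo s t ∩ (fun x => f x - l x) ⁻¹' Ioi 0 with hU1def
  set U2 : Set ℝ := Ioo s t ∩ (fun x => l x - g x) ⁻¹' Ioi 0 with hU2def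
  have hU1o : IsOpen U1 :=
    ((hcf.mono hIoo_sub).sub hcl.continuousOn).isOpen_inter_preimage isOpen_Ioo isOpen_Ioi
  have hU2o : IsOpen U2 :=
    (hcl.continuousOn.sub (hcg.mono hIoo_sub)).isOpen_inter_preimage isOpen_Ioo isOpen_Ioi
  have hDint : IntegrableOn D (Ioo s t) := by
    have h1 : IntegrableOn D U1 := by
      apply (hfint.mono_set (fun x hx => hIoo_sub hx.1)).congr_fun _ hU1o.measurableSet
      intro x hx
      have hlf : l x < f x := sub_pos.mp hx.2
      simp only [hDdef]
      rw [if_pos hlf]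
    have h2 : IntegrableOn D (U2 \ U1) := by
      apply (hgint.mono_set (fun x hx => hIoo_sub hx.1.1)).congr_fun _
        (hU2o.measurableSet.diff hU1o.measurableSet)
      rintro x ⟨⟨hxI, hx2⟩, hxn1⟩
      have hgl : g x < l x := sub_pos.mp hx2
      have hnf : ¬ l x < f x := fun h => hxn1 ⟨hxI, sub_pos.mpr h⟩
      simp only [hDdef]
      rw [if_neg hnf, if_pos hgl]
    have h3 : IntegrableOn D ((Ioo s t \ U1) \ U2) := by
      have hfin : volume ((Ioo s t \ U1) \ U2) < ⊤ :=
        lt_of_le_of_lt (measure_mono (fun y hy => hy.1.1))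
          (by simp [Real.volume_Ioo])
      have hconst : IntegrableOn (fun _ : ℝ => k) ((Ioo s t \ U1) \ U2) volume :=
        (integrableOn_const_iff (C := k)).mpr (Or.inr hfin)
      apply hconst.congr_fun _
        ((measurableSet_Ioo.diff hU1o.measurableSet).diff hU2o.measurableSet)
      rintro x ⟨⟨hxI, hxn1⟩, hxn2⟩
      have hnf : ¬ l x < f x := fun h => hxn1 ⟨hxI, sub_pos.mpr h⟩
      have hng : ¬ g x < l x := fun h => hxn2 ⟨hxI, sub_pos.mpr h⟩
      simp only [hDdef]
      rw [if_neg hnf, if_neg hng]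
    have hcover : Ioo s t ⊆ U1 ∪ (U2 \ U1) ∪ ((Ioo s t \ U1) \ U2) := by
      intro x hx
      by_cases h1 : x ∈ U1
      · exact Or.inl (Or.inl h1)
      · by_cases h2 : x ∈ U2
        · exact Or.inl (Or.inr ⟨h2, h1⟩)
        · exact Or.inr ⟨⟨hx, h1⟩, h2⟩
    exact ((h1.union h2).union h3).mono_set hcover
  have hDicc : IntegrableOn D (Icc s t) := (integrableOn_Icc_iff_integrableOn_Ioo (f := D)).mpr hDint
  have hqFTC : ∀ x ∈ Icc s t, ∫ y in s..x, D y = q x - q s := by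
    intro x hx
    apply MeasureTheory.integral_eq_of_hasDerivAt_off_countable_of_le q D hx.1
      (hE1c.union hE2c)
    · exact hqcont.mono (Icc_subset_Icc le_rfl hx.2)
    · intro y hy
      have hyIoo : y ∈ Ioo s t := ⟨hy.1.1, lt_of_lt_of_le hy.1.2 hx.2⟩
      exact hqD y hyIoo (fun h => hy.2 (Or.inl h)) (fun h => hy.2 (Or.inr h))
    · apply IntegrableOn.intervalIntegrable
      rw [uIcc_of_le hx.1]
      exact hDicc.mono_set (Icc_subset_Icc le_rfl hx.2)
  -- the competitor
  set w : ℝ → ℝ := fun x => max (f x) (min (u.modFun s t x) (g x)) with hwdef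
  set w' : ℝ → ℝ := fun x => if x ∈ Ioo s t then D x else u.deriv x with hw'def
  have hwq : ∀ x ∈ Icc s t, w x = q x := by
    intro x hx
    simp only [hwdef, hqdef, hmodl x hx]
  have hwu : ∀ x, x ∉ Ioo s t → x ∈ Icc a b → w x = u.toFun x := by
    intro x hx hxab
    obtain ⟨h1, h2⟩ := hbound x hxab
    simp only [hwdef, hmodu x hx]
    rw [min_eq_left h2, max_eq_right h1]
  have hw'int : IntegrableOn w' (Icc a b) := by
    have h1 : IntegrableOn w' (Icc a b \ Ioo s t) := by
      apply (u.integrable.mono_set diff_subset).congr_fun _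
        (measurableSet_Icc.diff measurableSet_Ioo)
      intro x hx
      simp only [hw'def]
      rw [if_neg hx.2]
    have h2 : IntegrableOn w' (Ioo s t) := by
      apply hDint.congr_fun _ measurableSet_Ioo
      intro x hx
      simp only [hw'def]
      rw [if_pos hx]
    have hcover : Icc a b ⊆ (Icc a b \ Ioo s t) ∪ Ioo s t := by
      intro x hx
      by_cases h : x ∈ Ioo s t
      · exact Or.inr h
      · exact Or.inl ⟨hx, h⟩
    exact (h1.union h2).mono_set hcover
  have hw'ii : ∀ c d, c ∈ Icc a b → d ∈ Icc a b → IntervalIntegrable w' volume c d := by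
    intro c d hc hd
    apply IntegrableOn.intervalIntegrable
    apply hw'int.mono_set
    rw [show Icc a b = uIcc a b from (uIcc_of_le hab.le).symm]
    exact uIcc_subset_uIcc (by rwa [uIcc_of_le hab.le]) (by rwa [uIcc_of_le hab.le])
  have huii : ∀ c d, c ∈ Icc a b → d ∈ Icc a b → IntervalIntegrable u.deriv volume c d := by
    intro c d hc hd
    apply IntegrableOn.intervalIntegrable
    apply u.integrable.mono_set
    rw [show Icc a b = uIcc a b from (uIcc_of_le hab.le).symm]
    exact uIcc_subset_uIcc (by rwa [uIcc_of_le hab.le]) (by rwa [uIcc_of_le hab.le])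
  have hrepA : ∀ x ∈ Icc a b, x ≤ s → w x = w a + ∫ y in a..x, w' y := by
    intro x hx hxs
    have h1 : w x = u.toFun x := hwu x (fun h => absurd h.1 (not_lt.mpr hxs)) hx
    have h2 : w a = u.toFun a := hwu a (fun h => absurd h.1 (not_lt.mpr hs.1)) ha'
    have h3 : ∫ y in a..x, w' y = ∫ y in a..x, u.deriv y := by
      apply intervalIntegral.integral_congr
      intro y hy
      rw [uIcc_of_le hx.1] at hy
      have : y ∉ Ioo s t := fun h => absurd h.1 (not_lt.mpr (hy.2.trans hxs))
      simp only [hw'def]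
      rw [if_neg this]
    rw [h1, h2, h3]
    exact u.rep x hx
  have hrepB : ∀ x ∈ Icc s t, w x = w a + ∫ y in a..x, w' y := by
    intro x hx
    have hxab : x ∈ Icc a b := hst_sub hx
    have h1 : ∫ y in s..x, w' y = ∫ y in s..x, D y := by
      apply intervalIntegral.integral_congr_ae
      have hxne : ∀ᵐ (y : ℝ), y ≠ x := by
        refine ae_iff.mpr ?_
        simp
      filter_upwards [hxne] with y hyne hymem
      rw [Set.uIoc_of_le hx.1] at hymem
      have hyIoo : y ∈ Ioo s t :=
        ⟨hymem.1, lt_of_lt_of_le (lt_of_le_of_ne hymem.2 hyne) hx.2⟩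
      simp only [hw'def]
      rw [if_pos hyIoo]
    have h2 := hqFTC x hx
    have h3 : w s = w a + ∫ y in a..s, w' y := hrepA s hs le_rfl
    have hsmem : s ∈ Icc s t := left_mem_Icc.mpr hst.le
    calc w x = q x := hwq x hx
      _ = q s + ∫ y in s..x, D y := by rw [h2]; ring
      _ = w s + ∫ y in s..x, w' y := by rw [← hwq s hsmem, h1]
      _ = w a + ((∫ y in a..s, w' y) + (∫ y in s..x, w' y)) := by rw [h3]; ring
      _ = w a + ∫ y in a..x, w' y := by
          rw [intervalIntegral.integral_add_adjacent_intervals (hw'ii a s ha' hs)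
            (hw'ii s x hs hxab)]
  have hrepC : ∀ x ∈ Icc a b, t ≤ x → w x = w a + ∫ y in a..x, w' y := by
    intro x hx htx
    have h1 : w x = u.toFun x := hwu x (fun h => absurd h.2 (not_lt.mpr htx)) hx
    have h3 : ∫ y in t..x, w' y = ∫ y in t..x, u.deriv y := by
      apply intervalIntegral.integral_congr
      intro y hy
      rw [uIcc_of_le htx] at hy
      have : y ∉ Ioo s t := fun h => absurd h.2 (not_lt.mpr hy.1)
      simp only [hw'def]
      rw [if_neg this]
    have h4 : ∫ y in t..x, u.deriv y = u.toFun x - u.toFun t := by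
      have e1 := u.rep x hx
      have e2 := u.rep t ht
      have e3 := intervalIntegral.integral_add_adjacent_intervals (huii a t ha' ht)
        (huii t x ht hx)
      rw [e1, e2]
      linarith [e3]
    have h5 : w t = w a + ∫ y in a..t, w' y := hrepB t (right_mem_Icc.mpr hst.le)
    have h6 : w t = u.toFun t := hwu t (fun h => absurd h.2 (lt_irrefl t)) ht
    calc w x = u.toFun x := h1
      _ = u.toFun t + ∫ y in t..x, u.deriv y := by rw [h4]; ring
      _ = w t + ∫ y in t..x, w' y := by rw [h6, h3]
      _ = w a + ((∫ y in a..t, w' y) + (∫ y in t..x, w' y)) := by rw [h5]; ring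
      _ = w a + ∫ y in a..x, w' y := by
          rw [intervalIntegral.integral_add_adjacent_intervals (hw'ii a t ha' ht)
            (hw'ii t x ht hx)]
  have hrep : ∀ x ∈ Icc a b, w x = w a + ∫ y in a..x, w' y := by
    intro x hx
    rcases le_total x s with h | h
    · exact hrepA x hx h
    · rcases le_total x t with h' | h'
      · exact hrepB x ⟨h, h'⟩
      · exact hrepC x hx h'
  refine ⟨⟨w, w', hw'int, hrep⟩, ?_, ?_, ?_, ?_, ?_⟩
  · intro x hx; rfl
  · intro x hx hxn; exact hwu x hxn hx
  · show w a = A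
    rw [hwu a (fun h => absurd h.1 (not_lt.mpr hs.1)) ha', hua]
  · show w b = B
    rw [hwu b (fun h => absurd h.2 (not_lt.mpr ht.2)) hb', hub]
  · intro x hx
    refine ⟨le_max_left _ _, ?_⟩
    exact max_le (hfg x hx).le (min_le_right _ _)
end
end
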